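/- Let X = {1,2} with multiplication given by the table 2232: 1·1 = 2, 1·2 = 2, 2·1 = 3, 2·2 = 2 — here 2·1 = 3 means undefined, so this is a partial magma. For the induced K-algebra K[X] with basis {e₁, e₂} where eₓ·e_y = e_{x·y} when defined and 0 otherwise, and τ_α the linear map induced by a partial function α : X → X (sending x to e_{α(x)} if defined, else 0), the algebra (K[X], μ, τ_α) is Hom-associative (i.e., τ_α(a)·(b·c) = (a·b)·τ_α(c) for all a,b,c ∈ K[X]) if and only if α is the totally undefined partial function. -/
import Mathlib


/-- Partial magma table 2232 on {1,2} (1 ↦ index 0, 2 ↦ index 1):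
    ∇(1,1)=2, ∇(1,2)=2, ∇(2,1) undefined, ∇(2,2)=2. -/
def nabla9 : Fin 2 → Fin 2 → Option (Fin 2) :=
  fun x y => if x = 0 then some 1 else (if y = 0 then none else some 1)

/-- The induced bilinear multiplication on K[X] ≅ Fin 2 → K:
    μ(a,b) = Σ_{x,y} a x * b y • e_{∇(x,y)} (0 when undefined). -/
def mu9 {K : Type*} [Field K] (a b : Fin 2 → K) : Fin 2 → K :=
  fun i => ∑ x : Fin 2, ∑ y : Fin 2, if nabla9 x y = some i then a x * b y else 0

/-- The linear map τ_α induced by a partial function α : X → X. -/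
def tau9 {K : Type*} [Field K] (α : Fin 2 → Option (Fin 2)) (a : Fin 2 → K) : Fin 2 → K :=
  fun i => ∑ x : Fin 2, if α x = some i then a x else 0

theorem stmt_9 {K : Type*} [Field K] (α : Fin 2 → Option (Fin 2)) :
    (∀ a b c : Fin 2 → K,
        mu9 (tau9 α a) (mu9 b c) = mu9 (mu9 a b) (tau9 α c)) ↔
      α = fun _ => none := by
  constructor
  · intro h
    have h1 := congrFun (h ![(0:K),1] ![1,0] ![1,0]) 1
    have h2 := congrFun (h ![(1:K),0] ![1,0] ![1,0]) 1
    have h3 := congrFun (h ![(1:K),0] ![0,1] ![1,0]) 1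
    rcases h0 : α 0 with _|v0
    · rcases ha : α 1 with _|v1
      · funext x; fin_cases x
        · exact h0
        · exact ha
      · fin_cases v1 <;>
          simp [mu9, nabla9, tau9, Fin.sum_univ_two, h0, ha] at h1
    · fin_cases v0 <;>
        simp [mu9, nabla9, tau9, Fin.sum_univ_two, h0] at h2 h3
  · intro h
    subst h
    intro a b c
    funext i
    simp [mu9, nabla9, tau9, Fin.sum_univ_two]
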